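/- arXiv:1904.03671 — 2 statements merged into one kernel-verified Lean document; each statement's English description precedes it below -/
import Mathlib

section
/- Let (L(P),⊢) be a disjunctive sequent calculus. For any logical state S and any finite subset Γ of S, the set [Γ]_S = ⋂{W : W is a logical state and Γ ⊆ W ⊆ S} is a compact element of the dcpo (|(L(P),⊢)|,⊆) of all logical states ordered by inclusion. -/
/- ## Syntax of disjunctive propositional logic -/

/-- Raw formulae over a set `P` of atomic formulae: atoms, the constants
`T` and `F`, binary conjunction, and disjunction of an arbitrary family
of formulae. -/
inductive Fm (P : Type) : Type 1 where
  | atom : P → Fm P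
  | tt : Fm P
  | ff : Fm P
  | conj : Fm P → Fm P → Fm P
  | disj : {ι : Type} → (ι → Fm P) → Fm P

namespace Fm

/-- The valid sequents of the disjunctive sequent calculus generated from the
disjunctive basis `(P, A)`, where `A` is the set of atomic disjointness
assumptions `p₁,…,pₙ ⊢ F` (each given by a finite nonempty set of atoms). -/
inductive Seq {P : Type} (A : Set (Set P)) : Set (Fm P) → Fm P → Prop where
  | ax {s : Set P} : s ∈ A → s.Finite → s.Nonempty → Seq A (Fm.atom '' s) Fm.ff
  | id (φ : Fm P) : Seq A {φ} φ
  | lwk {Γ : Set (Fm P)} {ψ : Fm P} (φ : Fm P) : Seq A Γ ψ → Seq A (insert φ Γ) ψ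
  | cut {Γ Δ : Set (Fm P)} {φ ψ : Fm P} :
      Seq A Γ φ → Seq A (insert φ Δ) ψ → Seq A (Γ ∪ Δ) ψ
  | lf (φ : Fm P) : Seq A {Fm.ff} φ
  | rt : Seq A ∅ Fm.tt
  | landl {Γ : Set (Fm P)} {φ ψ θ : Fm P} :
      Seq A (insert φ (insert ψ Γ)) θ → Seq A (insert (Fm.conj φ ψ) Γ) θ
  | randr {Γ Δ : Set (Fm P)} {φ ψ : Fm P} :
      Seq A Γ φ → Seq A Δ ψ → Seq A (Γ ∪ Δ) (Fm.conj φ ψ)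
  | ldisj {Γ : Set (Fm P)} {θ : Fm P} {ι : Type} {f : ι → Fm P} :
      (∀ i, Seq A (insert (f i) Γ) θ) → (∀ i j, i ≠ j → Seq A {f i, f j} Fm.ff) →
      Seq A (insert (Fm.disj f) Γ) θ
  | rdisj {Γ : Set (Fm P)} {ι : Type} {f : ι → Fm P} (i₀ : ι) :
      Seq A Γ (f i₀) → (∀ i j, i ≠ j → Seq A {f i, f j} Fm.ff) →
      Seq A Γ (Fm.disj f)

/-- The wellformed formulae `L(P)` generated from the disjunctive basis
`(P, A)`: disjunctions are only formed over provably pairwise disjoint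
families. -/
inductive WF {P : Type} (A : Set (Set P)) : Fm P → Prop where
  | atom (p : P) : WF A (Fm.atom p)
  | tt : WF A Fm.tt
  | ff : WF A Fm.ff
  | conj {φ ψ : Fm P} : WF A φ → WF A ψ → WF A (Fm.conj φ ψ)
  | disj {ι : Type} {f : ι → Fm P} : (∀ i, WF A (f i)) →
      (∀ i j, i ≠ j → Seq A {f i, f j} Fm.ff) → WF A (Fm.disj f)

end Fm

/- ## Generic notions relative to a wellformedness predicate `W` (the set
`L(P)` of formulae) and an entailment relation `E` (the valid sequents). -/

section Defs

variable {P Q R : Type}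

/-- `φ` is a tautology: `T ⊢ φ` is valid. -/
def Taut (W : Fm P → Prop) (E : Set (Fm P) → Fm P → Prop) (φ : Fm P) : Prop :=
  W φ ∧ E {Fm.tt} φ

/-- `φ` is a contradiction: `φ ⊢ F` is valid. -/
def Contra (W : Fm P → Prop) (E : Set (Fm P) → Fm P → Prop) (φ : Fm P) : Prop :=
  W φ ∧ E {φ} Fm.ff

/-- `φ` is satisfiable: neither a tautology nor a contradiction. -/
def Satisfiable (W : Fm P → Prop) (E : Set (Fm P) → Fm P → Prop) (φ : Fm P) : Prop :=
  W φ ∧ ¬ Taut W E φ ∧ ¬ Contra W E φ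

/-- Built up from atomic formulae only by conjunctive connectives. -/
inductive ConjShape {P : Type} : Fm P → Prop where
  | atom (p : P) : ConjShape (Fm.atom p)
  | conj {φ ψ : Fm P} : ConjShape φ → ConjShape ψ → ConjShape (Fm.conj φ ψ)

/-- A conjunction: a satisfiable formula built up from atomic formulae only
by conjunctive connectives. -/
def IsConjForm (W : Fm P → Prop) (E : Set (Fm P) → Fm P → Prop) (φ : Fm P) : Prop :=
  ConjShape φ ∧ Satisfiable W E φ

/-- `X[⊢] = {φ ∈ L(P) : Γ ⊢ φ is valid for some finite Γ ⊆ X}`. -/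
def entClose (W : Fm P → Prop) (E : Set (Fm P) → Fm P → Prop) (X : Set (Fm P)) :
    Set (Fm P) :=
  {φ | W φ ∧ ∃ Γ : Set (Fm P), Γ ⊆ X ∧ Γ.Finite ∧ E Γ φ}

/-- A logical state: a nonempty proper subset `S` of `L(P)` such that
(S1) any flat formula `⋁̇ᵢ μᵢ` in `S` has some disjunct `μᵢ₀ ∈ S`, and
(S2) `S[⊢] ⊆ S`. -/
structure IsLogicalState (W : Fm P → Prop) (E : Set (Fm P) → Fm P → Prop)
    (S : Set (Fm P)) : Prop where
  nonempty : S.Nonempty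
  subset : S ⊆ {φ | W φ}
  proper : S ≠ {φ | W φ}
  s1 : ∀ (ι : Type) (f : ι → Fm P), (∀ i, IsConjForm W E (f i)) →
      (∀ i j, i ≠ j → E {f i, f j} Fm.ff) → Satisfiable W E (Fm.disj f) →
      Fm.disj f ∈ S → ∃ i, f i ∈ S
  s2 : entClose W E S ⊆ S

/-- `[X]_S`: the intersection of all logical states `T` with `X ⊆ T ⊆ S`. -/
def clIn (W : Fm P → Prop) (E : Set (Fm P) → Fm P → Prop) (X S : Set (Fm P)) :
    Set (Fm P) :=
  ⋂₀ {T | IsLogicalState W E T ∧ X ⊆ T ∧ T ⊆ S}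

/-- An irreducible conjunction. -/
def IsIrredConj (W : Fm P → Prop) (E : Set (Fm P) → Fm P → Prop) (μ : Fm P) : Prop :=
  IsConjForm W E μ ∧ ∀ (ι : Type) (f : ι → Fm P), (∀ i, W (f i)) →
    (∀ i j, i ≠ j → E {f i, f j} Fm.ff) → E {μ} (Fm.disj f) → ∃ i, E {μ} (f i)

/-- An expressive disjunctive sequent calculus: every satisfiable formula is
logically equivalent to an irreducible flat formula (from below disjunctwise). -/
def Expressive (W : Fm P → Prop) (E : Set (Fm P) → Fm P → Prop) : Prop :=
  ∀ ψ : Fm P, Satisfiable W E ψ → ∃ (ι : Type) (f : ι → Fm P),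
    (∀ i, IsIrredConj W E (f i)) ∧ (∀ i j, i ≠ j → E {f i, f j} Fm.ff) ∧
    Satisfiable W E (Fm.disj f) ∧ E {ψ} (Fm.disj f) ∧ ∀ i, E {f i} ψ

/-- `Θ[X] = {φ ∈ L(Q) : (μ,φ) ∈ Θ for some μ ∈ X ∩ IC(P)}`. -/
def ThetaImage (WP : Fm P → Prop) (EP : Set (Fm P) → Fm P → Prop)
    (Θ : Fm P → Fm Q → Prop) (X : Set (Fm P)) : Set (Fm Q) :=
  {φ | ∃ μ ∈ X, IsIrredConj WP EP μ ∧ Θ μ φ}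

/-- A consequence relation `Θ ⊆ IC(P) × L(Q)` satisfying (R1), (R2), (R3). -/
def IsConsRel (WP : Fm P → Prop) (EP : Set (Fm P) → Fm P → Prop)
    (WQ : Fm Q → Prop) (EQ : Set (Fm Q) → Fm Q → Prop)
    (Θ : Fm P → Fm Q → Prop) : Prop :=
  (∀ μ ψ, Θ μ ψ → IsIrredConj WP EP μ ∧ WQ ψ) ∧
  (∀ μ ν ψ, IsIrredConj WP EP μ → EP {μ} ν → Θ ν ψ → Θ μ ψ) ∧
  (∀ μ φ ψ, WQ ψ → Θ μ φ → EQ {φ} ψ → Θ μ ψ) ∧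
  (∀ μ ψ, Θ μ ψ → ∃ ν, IsIrredConj WQ EQ ν ∧ Θ μ ν ∧ EQ {ν} ψ)

/-- Composition of consequence relations. -/
def consRelComp (WQ : Fm Q → Prop) (EQ : Set (Fm Q) → Fm Q → Prop)
    (Θ : Fm P → Fm Q → Prop) (Θ' : Fm Q → Fm R → Prop) : Fm P → Fm R → Prop :=
  fun μ φ => ∃ ν, IsIrredConj WQ EQ ν ∧ Θ μ ν ∧ Θ' ν φ

/-- The identity consequence relation `(μ,φ) ∈ id_P ↔ φ ∈ {μ}[⊢_P]`. -/
def consRelId (W : Fm P → Prop) (E : Set (Fm P) → Fm P → Prop) : Fm P → Fm P → Prop :=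
  fun μ φ => IsIrredConj W E μ ∧ φ ∈ entClose W E {μ}

end Defs

/-- The poset of logical states of the calculus generated by the basis `(P,A)`,
ordered by set inclusion. -/
abbrev LSt (P : Type) (A : Set (Set P)) : Type 1 :=
  {S : Set (Fm P) // IsLogicalState (Fm.WF A) (Fm.Seq A) S}

/- ## Domain-theoretic notions -/

/-- A compact element of a poset (w.r.t. suprema of directed subsets). -/
def IsCompactElt {α : Type*} [PartialOrder α] (x : α) : Prop :=
  ∀ d : Set α, d.Nonempty → DirectedOn (· ≤ ·) d → ∀ s, IsLUB d s → x ≤ s →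
    ∃ y ∈ d, x ≤ y

/-- An algebraic domain: a pointed dcpo in which every element is the
supremum of the directed set of compact elements below it. -/
def IsAlgebraicDomain (α : Type*) [PartialOrder α] : Prop :=
  (∃ b : α, ∀ x, b ≤ x) ∧
  (∀ d : Set α, d.Nonempty → DirectedOn (· ≤ ·) d → ∃ s, IsLUB d s) ∧
  (∀ x : α, ({k : α | IsCompactElt k ∧ k ≤ x}).Nonempty ∧
    DirectedOn (· ≤ ·) {k : α | IsCompactElt k ∧ k ≤ x} ∧
    IsLUB {k : α | IsCompactElt k ∧ k ≤ x} x)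

/-- An algebraic L-domain: an algebraic domain in which every principal ideal
`↓x` is a complete lattice (every subset of `↓x` has a supremum in `↓x`). -/
def IsAlgebraicLDomain (α : Type*) [PartialOrder α] : Prop :=
  IsAlgebraicDomain α ∧
  ∀ x : α, ∀ T : Set α, T ⊆ Set.Iic x → ∃ s ∈ Set.Iic x,
    (∀ t ∈ T, t ≤ s) ∧ ∀ u ∈ Set.Iic x, (∀ t ∈ T, t ≤ u) → s ≤ u

/- ## The calculus associated with an algebraic L-domain -/

/-- The atomic formulae of the associated calculus: (upsets of) elements of
`K*(D)`, the compact non-bottom elements. -/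
abbrev LAtom (D : Type) [PartialOrder D] : Type := {x : D // IsCompactElt x ∧ ¬ IsBot x}

/-- The interpretation `φ̂ ⊆ D` of a formula: `F, T, ∧, ⋁̇` become
`∅, D`, intersection and union. -/
def hat {D : Type} [PartialOrder D] : Fm (LAtom D) → Set D
  | Fm.atom x => Set.Ici x.val
  | Fm.tt => Set.univ
  | Fm.ff => ∅
  | Fm.conj φ ψ => hat φ ∩ hat ψ
  | Fm.disj f => ⋃ i, hat (f i)

/-- The formulae `L(P_D)` of the associated calculus: disjunctions only of
families with pairwise disjoint interpretations. -/
inductive DWF {D : Type} [PartialOrder D] : Fm (LAtom D) → Prop where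
  | atom (p : LAtom D) : DWF (Fm.atom p)
  | tt : DWF Fm.tt
  | ff : DWF Fm.ff
  | conj {φ ψ : Fm (LAtom D)} : DWF φ → DWF ψ → DWF (Fm.conj φ ψ)
  | disj {ι : Type} {f : ι → Fm (LAtom D)} : (∀ i, DWF (f i)) →
      (∀ i j, i ≠ j → hat (f i) ∩ hat (f j) = ∅) → DWF (Fm.disj f)

/-- Validity in the associated calculus: `ψ₁,…,ψₙ ⊢_D φ` iff
`ψ̂₁ ∩ … ∩ ψ̂ₙ ⊆ φ̂`. -/
def DSeq {D : Type} [PartialOrder D] (Γ : Set (Fm (LAtom D))) (φ : Fm (LAtom D)) : Prop :=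
  ⋂₀ (hat '' Γ) ⊆ hat φ

/-- A decomposable subset of `D`: the upper set `↑A` of a pairwise
inconsistent set `A` of compact elements. -/
def IsDecomposable {D : Type} [PartialOrder D] (U : Set D) : Prop :=
  ∃ A : Set D, (∀ a ∈ A, IsCompactElt a) ∧
    (∀ a ∈ A, ∀ b ∈ A, a ≠ b → Set.Ici a ∩ Set.Ici b = ∅) ∧
    U = ⋃ a ∈ A, Set.Ici a

/-- The conjunction `↑x₁ ∧ ↑x₂ ∧ … ∧ ↑xₙ` of a nonempty list of atoms. -/
def bigConj {P : Type} (x : P) (l : List P) : Fm P :=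
  l.foldl (fun φ y => Fm.conj φ (Fm.atom y)) (Fm.atom x)

/-!
The intersection of logical states that all lie below one logical state `S` is again a logical
state: for (S1), two members choosing different disjuncts of a flat formula would put two
disjoint disjuncts into `S` and hence `F ∈ S`. So `[Γ]_S` is a logical state. If it lies in
the directed union of logical states `𝒮`, the finite set `Γ` lies in a single `T ∈ 𝒮`;
then `[Γ]_S ∩ T` is a logical state below `⋃₀ 𝒮` with `Γ ⊆ [Γ]_S ∩ T ⊆ S`, so minimality
of `[Γ]_S` gives `[Γ]_S ⊆ T`.
-/

namespace IsLogicalState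

variable {P : Type} {A : Set (Set P)} {S : Set (Fm P)}

lemma ff_not_mem (hS : IsLogicalState (Fm.WF A) (Fm.Seq A) S) : Fm.ff ∉ S := by
  intro hff
  refine hS.proper (hS.subset.antisymm fun φ hφ => hS.s2 ?_)
  exact ⟨hφ, {Fm.ff}, Set.singleton_subset_iff.2 hff, Set.finite_singleton _, Fm.Seq.lf φ⟩

lemma tt_mem (hS : IsLogicalState (Fm.WF A) (Fm.Seq A) S) : Fm.tt ∈ S :=
  hS.s2 ⟨Fm.WF.tt, ∅, Set.empty_subset _, Set.finite_empty, Fm.Seq.rt⟩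

lemma not_seq_ff_of_mem (hS : IsLogicalState (Fm.WF A) (Fm.Seq A) S) {φ ψ : Fm P}
    (hφ : φ ∈ S) (hψ : ψ ∈ S) : ¬ Fm.Seq A {φ, ψ} Fm.ff := fun hseq =>
  hS.ff_not_mem <| hS.s2
    ⟨Fm.WF.ff, {φ, ψ}, Set.insert_subset hφ (Set.singleton_subset_iff.2 hψ), Set.toFinite _, hseq⟩

lemma sInter (hS : IsLogicalState (Fm.WF A) (Fm.Seq A) S) {𝒞 : Set (Set (Fm P))}
    (hne : 𝒞.Nonempty) (h𝒞 : ∀ T ∈ 𝒞, IsLogicalState (Fm.WF A) (Fm.Seq A) T ∧ T ⊆ S) :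
    IsLogicalState (Fm.WF A) (Fm.Seq A) (⋂₀ 𝒞) := by
  obtain ⟨T₀, hT₀⟩ := hne
  obtain ⟨hT₀state, hT₀S⟩ := h𝒞 T₀ hT₀
  refine ⟨⟨Fm.tt, fun T hT => (h𝒞 T hT).1.tt_mem⟩, fun φ hφ => hT₀state.subset (hφ T₀ hT₀),
    fun heq => hT₀state.ff_not_mem ((heq ▸ Fm.WF.ff : Fm.ff ∈ ⋂₀ 𝒞) T₀ hT₀), ?_, ?_⟩
  · intro ι f hconj hpair hsat hf
    obtain ⟨i₀, hi₀⟩ := hT₀state.s1 ι f hconj hpair hsat (hf T₀ hT₀)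
    refine ⟨i₀, fun T hT => ?_⟩
    obtain ⟨hTstate, hTS⟩ := h𝒞 T hT
    obtain ⟨i, hi⟩ := hTstate.s1 ι f hconj hpair hsat (hf T hT)
    obtain rfl : i = i₀ := by_contra fun hii₀ =>
      hS.not_seq_ff_of_mem (hTS hi) (hT₀S hi₀) (hpair i i₀ hii₀)
    exact hi
  · rintro φ ⟨hφ, Δ, hΔ, hfin, hseq⟩ T hT
    exact (h𝒞 T hT).1.s2 ⟨hφ, Δ, fun ψ hψ => hΔ hψ T hT, hfin, hseq⟩

lemma inter {U T₁ T₂ : Set (Fm P)} (hU : IsLogicalState (Fm.WF A) (Fm.Seq A) U)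
    (h₁ : IsLogicalState (Fm.WF A) (Fm.Seq A) T₁) (h₂ : IsLogicalState (Fm.WF A) (Fm.Seq A) T₂)
    (hT₁U : T₁ ⊆ U) (hT₂U : T₂ ⊆ U) : IsLogicalState (Fm.WF A) (Fm.Seq A) (T₁ ∩ T₂) := by
  rw [← Set.sInter_pair]
  refine hU.sInter (Set.insert_nonempty _ _) ?_
  rintro T (rfl | rfl)
  exacts [⟨h₁, hT₁U⟩, ⟨h₂, hT₂U⟩]

lemma sUnion {𝒮 : Set (Set (Fm P))} (hne : 𝒮.Nonempty) (hdir : DirectedOn (· ⊆ ·) 𝒮)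
    (h𝒮 : ∀ T ∈ 𝒮, IsLogicalState (Fm.WF A) (Fm.Seq A) T) :
    IsLogicalState (Fm.WF A) (Fm.Seq A) (⋃₀ 𝒮) := by
  obtain ⟨T₀, hT₀⟩ := hne
  refine ⟨⟨Fm.tt, T₀, hT₀, (h𝒮 T₀ hT₀).tt_mem⟩, fun φ ⟨T, hT, hφ⟩ => (h𝒮 T hT).subset hφ,
    fun heq => ?_, ?_, ?_⟩
  · obtain ⟨T, hT, hff⟩ : Fm.ff ∈ ⋃₀ 𝒮 := heq ▸ Fm.WF.ff
    exact (h𝒮 T hT).ff_not_mem hff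
  · rintro ι f hconj hpair hsat ⟨T, hT, hf⟩
    obtain ⟨i, hi⟩ := (h𝒮 T hT).s1 ι f hconj hpair hsat hf
    exact ⟨i, T, hT, hi⟩
  · rintro φ ⟨hφ, Δ, hΔ, hfin, hseq⟩
    obtain ⟨T, hT, hΔT⟩ := hdir.exists_mem_subset_of_finite_of_subset_sUnion ⟨T₀, hT₀⟩ hfin hΔ
    exact ⟨T, hT, (h𝒮 T hT).s2 ⟨hφ, Δ, hΔT, hfin, hseq⟩⟩

end IsLogicalState

section clIn

variable {P : Type} {A : Set (Set P)} {Γ S : Set (Fm P)}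

lemma subset_clIn : Γ ⊆ clIn (Fm.WF A) (Fm.Seq A) Γ S :=
  fun _ hφ _ hT => hT.2.1 hφ

lemma clIn_subset_of_mem {T : Set (Fm P)} (hT : IsLogicalState (Fm.WF A) (Fm.Seq A) T)
    (hΓT : Γ ⊆ T) (hTS : T ⊆ S) : clIn (Fm.WF A) (Fm.Seq A) Γ S ⊆ T :=
  Set.sInter_subset_of_mem ⟨hT, hΓT, hTS⟩

lemma isLogicalState_clIn (hS : IsLogicalState (Fm.WF A) (Fm.Seq A) S) (hΓ : Γ ⊆ S) :
    IsLogicalState (Fm.WF A) (Fm.Seq A) (clIn (Fm.WF A) (Fm.Seq A) Γ S) :=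
  hS.sInter ⟨S, hS, hΓ, subset_rfl⟩ fun _ hT => ⟨hT.1, hT.2.2⟩

end clIn

/-- For a logical state `S` and a finite `Γ ⊆ S`, the set `[Γ]_S`
is a compact element of the dcpo of all logical states ordered by inclusion
(in which directed suprema are unions). -/
theorem stmt7 (P : Type) (A : Set (Set P)) (S : Set (Fm P))
    (hS : IsLogicalState (Fm.WF A) (Fm.Seq A) S)
    (Γ : Set (Fm P)) (hfin : Γ.Finite) (hΓ : Γ ⊆ S) :
    IsLogicalState (Fm.WF A) (Fm.Seq A) (clIn (Fm.WF A) (Fm.Seq A) Γ S) ∧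
    (∀ 𝒮 : Set (Set (Fm P)), 𝒮.Nonempty → DirectedOn (· ⊆ ·) 𝒮 →
      (∀ T ∈ 𝒮, IsLogicalState (Fm.WF A) (Fm.Seq A) T) →
      clIn (Fm.WF A) (Fm.Seq A) Γ S ⊆ ⋃₀ 𝒮 →
      ∃ T ∈ 𝒮, clIn (Fm.WF A) (Fm.Seq A) Γ S ⊆ T) := by
  have hC := isLogicalState_clIn hS hΓ
  refine ⟨hC, fun 𝒮 hne hdir h𝒮 hC𝒮 => ?_⟩
  obtain ⟨T, hT, hΓT⟩ :=
    hdir.exists_mem_subset_of_finite_of_subset_sUnion hne hfin (subset_clIn.trans hC𝒮)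
  have hCT : IsLogicalState (Fm.WF A) (Fm.Seq A) (clIn (Fm.WF A) (Fm.Seq A) Γ S ∩ T) :=
    (IsLogicalState.sUnion hne hdir h𝒮).inter hC (h𝒮 T hT) hC𝒮 (Set.subset_sUnion_of_mem hT)
  have hCS : clIn (Fm.WF A) (Fm.Seq A) Γ S ⊆ S := clIn_subset_of_mem hS hΓ subset_rfl
  refine ⟨T, hT, ?_⟩
  calc clIn (Fm.WF A) (Fm.Seq A) Γ S
      ⊆ clIn (Fm.WF A) (Fm.Seq A) Γ S ∩ T :=
        clIn_subset_of_mem hCT (Set.subset_inter subset_clIn hΓT) (Set.inter_subset_left.trans hCS)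
    _ ⊆ T := Set.inter_subset_right
end

section
/- Every algebraic L-domain (D,≤) is order-isomorphic to the poset (|(L(P_D),⊢_D)|,⊆) of logical states of its associated disjunctive sequent calculus ordered by inclusion; an isomorphism is given by d ↦ {φ ∈ L(P_D) : d ∈ φ̂}. -/
/- ## Auxiliary development for Statement 13 -/

section Stmt13Aux

open Set

variable {D : Type} [PartialOrder D]

lemma hat_upperSet : ∀ φ : Fm (LAtom D), IsUpperSet (hat φ)
  | Fm.atom x => isUpperSet_Ici x.val
  | Fm.tt => isUpperSet_univ
  | Fm.ff => isUpperSet_empty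
  | Fm.conj φ ψ => (hat_upperSet φ).inter (hat_upperSet ψ)
  | Fm.disj f => isUpperSet_iUnion fun i => hat_upperSet (f i)

lemma dseq_singleton {φ ψ : Fm (LAtom D)} : DSeq {φ} ψ ↔ hat φ ⊆ hat ψ := by
  simp [DSeq]

lemma dseq_pair {φ ψ θ : Fm (LAtom D)} : DSeq {φ, ψ} θ ↔ hat φ ∩ hat ψ ⊆ hat θ := by
  simp [DSeq, Set.image_pair, Set.sInter_pair]

lemma dseq_empty {φ : Fm (LAtom D)} : DSeq (∅ : Set (Fm (LAtom D))) φ ↔ Set.univ ⊆ hat φ := by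
  simp [DSeq]

/-- Minimal upper bounds of a pair. -/
def Mub (x y : D) : Set D :=
  {w | x ≤ w ∧ y ≤ w ∧ ∀ v, x ≤ v → y ≤ v → v ≤ w → v = w}

lemma pair_subset_Iic {x y u : D} (hx : x ≤ u) (hy : y ≤ u) :
    ({x, y} : Set D) ⊆ Set.Iic u := by
  intro t ht
  rcases ht with rfl | ht
  · exact hx
  · rw [Set.mem_singleton_iff] at ht; subst ht; exact hy

lemma exists_mub_le (hD : IsAlgebraicLDomain D) {x y u : D} (hx : x ≤ u) (hy : y ≤ u) :
    ∃ w ∈ Mub x y, w ≤ u := by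
  obtain ⟨s, hs, hub, hle⟩ := hD.2 u {x, y} (pair_subset_Iic hx hy)
  refine ⟨s, ⟨hub x (by simp), hub y (by simp), ?_⟩, hs⟩
  intro v hvx hvy hvs
  exact le_antisymm hvs (hle v (le_trans hvs hs)
    (fun t ht => by
      rcases ht with rfl | ht
      · exact hvx
      · rw [Set.mem_singleton_iff] at ht; subst ht; exact hvy))

lemma mub_compact (hD : IsAlgebraicLDomain D) {x y w : D}
    (hcx : IsCompactElt x) (hcy : IsCompactElt y) (hw : w ∈ Mub x y) :
    IsCompactElt w := by
  intro d hdne hdir s hlub hws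
  obtain ⟨u, hu, hxu⟩ := hcx d hdne hdir s hlub (hw.1.trans hws)
  obtain ⟨v, hv, hyv⟩ := hcy d hdne hdir s hlub (hw.2.1.trans hws)
  obtain ⟨t, ht, hut, hvt⟩ := hdir u hu v hv
  obtain ⟨w', hw's, hub, hle⟩ := hD.2 s {x, y}
    (pair_subset_Iic (hw.1.trans hws) (hw.2.1.trans hws))
  have hw'w : w' ≤ w := hle w hws
    (fun z hz => by
      rcases hz with rfl | hz
      · exact hw.1
      · rw [Set.mem_singleton_iff] at hz; subst hz; exact hw.2.1)
  have hww' : w' = w := hw.2.2 w' (hub x (by simp)) (hub y (by simp)) hw'w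
  refine ⟨t, ht, ?_⟩
  rw [← hww']
  exact hle t (hlub.1 ht)
    (fun z hz => by
      rcases hz with rfl | hz
      · exact hxu.trans hut
      · rw [Set.mem_singleton_iff] at hz; subst hz; exact hyv.trans hvt)

lemma mub_Ici_disjoint (hD : IsAlgebraicLDomain D) {x y w₁ w₂ : D}
    (h₁ : w₁ ∈ Mub x y) (h₂ : w₂ ∈ Mub x y) (hne : w₁ ≠ w₂) :
    Set.Ici w₁ ∩ Set.Ici w₂ = ∅ := by
  rw [Set.eq_empty_iff_forall_notMem]
  rintro u ⟨hu₁, hu₂⟩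
  obtain ⟨w', hw', hub, hle⟩ := hD.2 u {x, y} (pair_subset_Iic (h₁.1.trans hu₁) (h₁.2.1.trans hu₁))
  have hubs : ∀ z : D, z ∈ Mub x y → u ∈ Set.Ici z → w' = z := by
    intro z hz hu
    exact hz.2.2 w' (hub x (by simp)) (hub y (by simp))
      (hle z hu (fun t ht => by
        rcases ht with rfl | ht
        · exact hz.1
        · rw [Set.mem_singleton_iff] at ht; subst ht; exact hz.2.1))
  exact hne ((hubs w₁ h₁ hu₁).symm.trans (hubs w₂ h₂ hu₂))

/-- Decomposition of the interpretation of a wellformed formula. -/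
lemma hat_decomp (hD : IsAlgebraicLDomain D) {φ : Fm (LAtom D)} (h : DWF φ) :
    ∃ A : Set D, (∀ a ∈ A, IsCompactElt a) ∧
      (∀ a ∈ A, ∀ b ∈ A, a ≠ b → Set.Ici a ∩ Set.Ici b = ∅) ∧
      hat φ = ⋃ a ∈ A, Set.Ici a := by
  induction h with
  | atom p =>
      refine ⟨{p.val}, ?_, ?_, by simp [hat]⟩
      · intro a ha; rw [Set.mem_singleton_iff] at ha; subst ha; exact p.2.1
      · intro a ha b hb hab
        rw [Set.mem_singleton_iff] at ha hb
        exact absurd (ha.trans hb.symm) hab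
  | tt =>
      obtain ⟨b, hb⟩ := hD.1.1
      refine ⟨{b}, ?_, ?_, ?_⟩
      · intro a ha; rw [Set.mem_singleton_iff] at ha; subst ha
        intro d hdne _ s _ _
        obtain ⟨y, hy⟩ := hdne
        exact ⟨y, hy, hb y⟩
      · intro a ha c hc hac
        rw [Set.mem_singleton_iff] at ha hc
        exact absurd (ha.trans hc.symm) hac
      · ext u; simp [hat, hb u]
  | ff => exact ⟨∅, by simp, by simp, by simp [hat]⟩
  | conj h₁ h₂ ih₁ ih₂ =>
      obtain ⟨A, hAc, hAd, hAe⟩ := ih₁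
      obtain ⟨B, hBc, hBd, hBe⟩ := ih₂
      refine ⟨{w | ∃ a ∈ A, ∃ b ∈ B, w ∈ Mub a b}, ?_, ?_, ?_⟩
      · rintro w ⟨a, ha, b, hb, hw⟩
        exact mub_compact hD (hAc a ha) (hBc b hb) hw
      · rintro w₁ ⟨a₁, ha₁, b₁, hb₁, hw₁⟩ w₂ ⟨a₂, ha₂, b₂, hb₂, hw₂⟩ hne
        rw [Set.eq_empty_iff_forall_notMem]
        rintro u ⟨hu₁, hu₂⟩
        have haa : a₁ = a₂ := by
          by_contra hne'
          have := hAd a₁ ha₁ a₂ ha₂ hne'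
          rw [Set.eq_empty_iff_forall_notMem] at this
          exact this u ⟨hw₁.1.trans hu₁, hw₂.1.trans hu₂⟩
        have hbb : b₁ = b₂ := by
          by_contra hne'
          have := hBd b₁ hb₁ b₂ hb₂ hne'
          rw [Set.eq_empty_iff_forall_notMem] at this
          exact this u ⟨hw₁.2.1.trans hu₁, hw₂.2.1.trans hu₂⟩
        subst haa; subst hbb
        have := mub_Ici_disjoint hD hw₁ hw₂ hne
        rw [Set.eq_empty_iff_forall_notMem] at this
        exact this u ⟨hu₁, hu₂⟩
      · ext u
        constructor
        · intro hu
          have h1 : u ∈ hat _ ∩ hat _ := hu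
          have hA : u ∈ ⋃ a ∈ A, Set.Ici a := hAe ▸ h1.1
          have hB : u ∈ ⋃ b ∈ B, Set.Ici b := hBe ▸ h1.2
          obtain ⟨a, ha, hau⟩ := Set.mem_iUnion₂.1 hA
          obtain ⟨b, hb, hbu⟩ := Set.mem_iUnion₂.1 hB
          obtain ⟨w, hw, hwu⟩ := exists_mub_le hD hau hbu
          exact Set.mem_iUnion₂.2 ⟨w, ⟨a, ha, b, hb, hw⟩, hwu⟩
        · intro hu
          obtain ⟨w, ⟨a, ha, b, hb, hw⟩, hwu⟩ := Set.mem_iUnion₂.1 hu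
          refine ⟨?_, ?_⟩
          · rw [hAe]; exact Set.mem_iUnion₂.2 ⟨a, ha, hw.1.trans hwu⟩
          · rw [hBe]; exact Set.mem_iUnion₂.2 ⟨b, hb, hw.2.1.trans hwu⟩
  | @disj ι f hwf hdis ih =>
      choose A hAc hAd hAe using ih
      refine ⟨⋃ i, A i, ?_, ?_, ?_⟩
      · intro a ha
        obtain ⟨i, hi⟩ := Set.mem_iUnion.1 ha
        exact hAc i a hi
      · intro a ha b hb hab
        obtain ⟨i, hi⟩ := Set.mem_iUnion.1 ha
        obtain ⟨j, hj⟩ := Set.mem_iUnion.1 hb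
        by_cases hij : i = j
        · subst hij; exact hAd i a hi b hj hab
        · rw [Set.eq_empty_iff_forall_notMem]
          rintro u ⟨hu₁, hu₂⟩
          have h1 : u ∈ hat (f i) := by
            rw [hAe i]; exact Set.mem_iUnion₂.2 ⟨a, hi, hu₁⟩
          have h2 : u ∈ hat (f j) := by
            rw [hAe j]; exact Set.mem_iUnion₂.2 ⟨b, hj, hu₂⟩
          have := hdis i j hij
          rw [Set.eq_empty_iff_forall_notMem] at this
          exact this u ⟨h1, h2⟩
      · ext u
        constructor
        · intro hu
          obtain ⟨i, hi⟩ := Set.mem_iUnion.1 hu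
          rw [hAe i] at hi
          obtain ⟨a, ha, hau⟩ := Set.mem_iUnion₂.1 hi
          exact Set.mem_iUnion₂.2 ⟨a, Set.mem_iUnion.2 ⟨i, ha⟩, hau⟩
        · intro hu
          obtain ⟨a, ha, hau⟩ := Set.mem_iUnion₂.1 hu
          obtain ⟨i, hi⟩ := Set.mem_iUnion.1 ha
          exact Set.mem_iUnion.2 ⟨i, by rw [hAe i]; exact Set.mem_iUnion₂.2 ⟨a, hi, hau⟩⟩

variable {S : Set (Fm (LAtom D))}

lemma LS.mem_of_mem_of_subset (hS : IsLogicalState DWF DSeq S) {φ ψ : Fm (LAtom D)}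
    (hφ : φ ∈ S) (hψ : DWF ψ) (hsub : hat φ ⊆ hat ψ) : ψ ∈ S :=
  hS.s2 ⟨hψ, {φ}, Set.singleton_subset_iff.2 hφ, Set.finite_singleton φ,
    dseq_singleton.2 hsub⟩

lemma LS.ff_not_mem (hS : IsLogicalState DWF DSeq S) : Fm.ff ∉ S := by
  intro h
  apply hS.proper
  apply Set.Subset.antisymm hS.subset
  intro ψ hψ
  exact LS.mem_of_mem_of_subset hS h hψ (by simp [hat])

lemma LS.hat_nonempty (hS : IsLogicalState DWF DSeq S) {φ : Fm (LAtom D)}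
    (hφ : φ ∈ S) : (hat φ).Nonempty := by
  rw [Set.nonempty_iff_ne_empty]
  intro h
  exact LS.ff_not_mem hS (LS.mem_of_mem_of_subset hS hφ DWF.ff (by simp [hat, h]))

lemma atom_satisfiable (p : LAtom D) : Satisfiable DWF DSeq (Fm.atom p) := by
  refine ⟨DWF.atom p, ?_, ?_⟩
  · rintro ⟨-, h⟩
    rw [dseq_singleton] at h
    exact p.2.2 fun u => h (Set.mem_univ u)
  · rintro ⟨-, h⟩
    rw [dseq_singleton] at h
    exact (h (le_refl p.val : p.val ∈ hat (Fm.atom p)) : p.val ∈ (∅ : Set D))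

/-- The key engine: if `φ ∈ S` and `hat φ` is covered by a pairwise inconsistent
family of nonbottom compacts, then some corresponding atom belongs to `S`. -/
lemma exists_atom_mem (hD : IsAlgebraicLDomain D) (hS : IsLogicalState DWF DSeq S)
    {φ : Fm (LAtom D)} (hφ : φ ∈ S) {A : Set D}
    (hc : ∀ a ∈ A, IsCompactElt a) (hnb : ∀ a ∈ A, ¬ IsBot a)
    (hd : ∀ a ∈ A, ∀ b ∈ A, a ≠ b → Set.Ici a ∩ Set.Ici b = ∅)
    (hsub : hat φ ⊆ ⋃ a ∈ A, Set.Ici a) :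
    ∃ a, ∃ h : IsCompactElt a ∧ ¬ IsBot a, a ∈ A ∧ Fm.atom ⟨a, h⟩ ∈ S := by
  classical
  let f : A → Fm (LAtom D) := fun i => Fm.atom ⟨i.val, hc _ i.2, hnb _ i.2⟩
  have hhatf : ∀ i : A, hat (f i) = Set.Ici i.val := fun i => rfl
  have hUnion : hat (Fm.disj f) = ⋃ a ∈ A, Set.Ici a := by
    show (⋃ i : A, hat (f i)) = _
    simp only [hhatf]
    ext u
    constructor
    · intro hu
      obtain ⟨i, hi⟩ := Set.mem_iUnion.1 hu
      exact Set.mem_iUnion₂.2 ⟨i.val, i.2, hi⟩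
    · intro hu
      obtain ⟨a, ha, hau⟩ := Set.mem_iUnion₂.1 hu
      exact Set.mem_iUnion.2 ⟨⟨a, ha⟩, hau⟩
  have hpairIci : ∀ i j : A, i ≠ j → hat (f i) ∩ hat (f j) = ∅ := by
    intro i j hij
    rw [hhatf, hhatf]
    exact hd _ i.2 _ j.2 (fun h => hij (Subtype.ext h))
  have hpair : ∀ i j : A, i ≠ j → DSeq {f i, f j} Fm.ff := by
    intro i j hij
    rw [dseq_pair, hpairIci i j hij]
    exact Set.empty_subset _
  have hWFd : DWF (Fm.disj f) := DWF.disj (fun i => DWF.atom _) hpairIci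
  have hdS : Fm.disj f ∈ S :=
    LS.mem_of_mem_of_subset hS hφ hWFd (by rw [hUnion]; exact hsub)
  obtain ⟨u, hu⟩ := LS.hat_nonempty hS hφ
  have hsat : Satisfiable DWF DSeq (Fm.disj f) := by
    refine ⟨hWFd, ?_, ?_⟩
    · rintro ⟨-, h⟩
      rw [dseq_singleton] at h
      obtain ⟨b, hb⟩ := hD.1.1
      have hbmem : b ∈ hat (Fm.disj f) := h (Set.mem_univ b)
      rw [hUnion] at hbmem
      obtain ⟨a, ha, hab⟩ := Set.mem_iUnion₂.1 hbmem
      exact hnb a ha (fun z => le_trans hab (hb z))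
    · rintro ⟨-, h⟩
      rw [dseq_singleton] at h
      have : u ∈ hat (Fm.disj f) := by rw [hUnion]; exact hsub hu
      exact (h this : u ∈ (∅ : Set D))
  obtain ⟨i, hi⟩ := hS.s1 A f (fun i => ⟨ConjShape.atom _, atom_satisfiable _⟩) hpair hsat hdS
  exact ⟨i.val, ⟨hc _ i.2, hnb _ i.2⟩, i.2, hi⟩

lemma Sd_isLogicalState (d : D) :
    IsLogicalState DWF DSeq {φ : Fm (LAtom D) | DWF φ ∧ d ∈ hat φ} where
  nonempty := ⟨Fm.tt, DWF.tt, Set.mem_univ d⟩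
  subset := fun _ hφ => hφ.1
  proper := by
    intro h
    have hff : Fm.ff ∈ {φ : Fm (LAtom D) | DWF φ ∧ d ∈ hat φ} := by
      rw [h]; exact DWF.ff
    exact hff.2
  s1 := by
    intro ι f hcf _ _ hmem
    have hd : d ∈ ⋃ i, hat (f i) := hmem.2
    obtain ⟨i, hi⟩ := Set.mem_iUnion.1 hd
    exact ⟨i, (hcf i).2.1, hi⟩
  s2 := by
    rintro φ ⟨hwf, Γ, hΓS, -, hseq⟩
    refine ⟨hwf, hseq (Set.mem_sInter.2 ?_)⟩
    rintro X ⟨ψ, hψ, rfl⟩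
    exact (hΓS hψ).2

lemma Sd_subset_iff (hD : IsAlgebraicLDomain D) {d e : D} :
    {φ : Fm (LAtom D) | DWF φ ∧ d ∈ hat φ} ⊆ {φ : Fm (LAtom D) | DWF φ ∧ e ∈ hat φ}
      ↔ d ≤ e := by
  constructor
  · intro h
    obtain ⟨-, -, hlub⟩ := hD.1.2.2 d
    apply hlub.2
    rintro k ⟨hkc, hkd⟩
    by_cases hb : IsBot k
    · exact hb e
    · have hmem : Fm.atom ⟨k, hkc, hb⟩ ∈ {φ : Fm (LAtom D) | DWF φ ∧ d ∈ hat φ} :=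
        ⟨DWF.atom _, hkd⟩
      exact (h hmem).2
  · intro hde φ hφ
    exact ⟨hφ.1, hat_upperSet φ hde hφ.2⟩

lemma Sd_surjective (hD : IsAlgebraicLDomain D) (S : Set (Fm (LAtom D)))
    (hS : IsLogicalState DWF DSeq S) :
    ∃ d : D, {φ : Fm (LAtom D) | DWF φ ∧ d ∈ hat φ} = S := by
  classical
  obtain ⟨b, hb⟩ := hD.1.1
  set C : Set D := {x | ∃ h : IsCompactElt x ∧ ¬ IsBot x, Fm.atom ⟨x, h⟩ ∈ S} with hCdef
  set C' : Set D := insert b C with hC'def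
  have hC'ne : C'.Nonempty := ⟨b, Set.mem_insert _ _⟩
  have hCup : ∀ x ∈ C, ∀ y ∈ C, ∃ z ∈ C, x ≤ z ∧ y ≤ z := by
    rintro x ⟨hx, hxS⟩ y ⟨hy, hyS⟩
    have hconjS : Fm.conj (Fm.atom ⟨x, hx⟩) (Fm.atom ⟨y, hy⟩) ∈ S := by
      apply hS.s2
      refine ⟨DWF.conj (DWF.atom _) (DWF.atom _),
        {Fm.atom ⟨x, hx⟩, Fm.atom ⟨y, hy⟩}, ?_, ?_, ?_⟩
      · rintro ψ (rfl | hψ)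
        · exact hxS
        · rw [Set.mem_singleton_iff] at hψ; subst hψ; exact hyS
      · exact (Set.finite_singleton _).insert _
      · rw [dseq_pair]
        exact Set.Subset.rfl
    have hsub : hat (Fm.conj (Fm.atom ⟨x, hx⟩) (Fm.atom ⟨y, hy⟩)) ⊆
        ⋃ w ∈ Mub x y, Set.Ici w := by
      rintro u ⟨hux, huy⟩
      obtain ⟨w, hw, hwu⟩ := exists_mub_le hD hux huy
      exact Set.mem_iUnion₂.2 ⟨w, hw, hwu⟩
    obtain ⟨w, hw, hwA, hwS⟩ := exists_atom_mem hD hS hconjS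
      (fun a ha => mub_compact hD hx.1 hy.1 ha)
      (fun a ha hbot => hx.2 (fun z => le_trans ha.1 (hbot z)))
      (fun a ha c hcm hac => mub_Ici_disjoint hD ha hcm hac)
      hsub
    exact ⟨w, ⟨hw, hwS⟩, hwA.1, hwA.2.1⟩
  have hdir : DirectedOn (· ≤ ·) C' := by
    rintro x hx y hy
    rcases hx with rfl | hx
    · exact ⟨y, hy, hb y, le_rfl⟩
    · rcases hy with rfl | hy
      · exact ⟨x, Set.mem_insert_iff.2 (Or.inr hx), le_rfl, hb x⟩
      · obtain ⟨z, hz, h₁, h₂⟩ := hCup x hx y hy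
        exact ⟨z, Set.mem_insert_iff.2 (Or.inr hz), h₁, h₂⟩
  obtain ⟨d, hdlub⟩ := hD.1.2.1 C' hC'ne hdir
  refine ⟨d, Set.Subset.antisymm ?_ ?_⟩
  · rintro φ ⟨hwf, hdφ⟩
    obtain ⟨A, hAc, hAd, hAe⟩ := hat_decomp hD hwf
    rw [hAe] at hdφ
    obtain ⟨a, ha, had⟩ := Set.mem_iUnion₂.1 hdφ
    obtain ⟨c, hc, hac⟩ := hAc a ha C' hC'ne hdir d hdlub had
    rcases hc with rfl | hc
    · apply hS.s2
      refine ⟨hwf, ∅, Set.empty_subset S, Set.finite_empty, ?_⟩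
      intro u _
      rw [hAe]
      exact Set.mem_iUnion₂.2 ⟨a, ha, le_trans hac (hb u)⟩
    · obtain ⟨hck, hcS⟩ := hc
      apply LS.mem_of_mem_of_subset hS hcS hwf
      rw [hAe]
      intro u hu
      exact Set.mem_iUnion₂.2 ⟨a, ha, le_trans hac hu⟩
  · intro φ hφ
    have hwf : DWF φ := hS.subset hφ
    obtain ⟨A, hAc, hAd, hAe⟩ := hat_decomp hD hwf
    refine ⟨hwf, ?_⟩
    rw [hAe]
    by_cases hex : ∃ a ∈ A, IsBot a
    · obtain ⟨a, ha, hbot⟩ := hex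
      exact Set.mem_iUnion₂.2 ⟨a, ha, hbot d⟩
    · push_neg at hex
      obtain ⟨a, ha, haA, haS⟩ := exists_atom_mem hD hS hφ hAc hex hAd (hAe ▸ Set.Subset.rfl)
      have haC' : a ∈ C' := Set.mem_insert_iff.2 (Or.inr ⟨ha, haS⟩)
      exact Set.mem_iUnion₂.2 ⟨a, haA, hdlub.1 haC'⟩

end Stmt13Aux

/-- Every algebraic L-domain `(D,≤)` is order-isomorphic to the
poset of logical states of its associated calculus ordered by inclusion, via
`d ↦ {φ ∈ L(P_D) : d ∈ φ̂}`. -/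
theorem stmt13 (D : Type) [PartialOrder D] (hD : IsAlgebraicLDomain D) :
    ∃ g : D ≃o {S : Set (Fm (LAtom D)) // IsLogicalState DWF DSeq S},
      ∀ d : D, ((g d : {S : Set (Fm (LAtom D)) // IsLogicalState DWF DSeq S}) :
        Set (Fm (LAtom D))) = {φ : Fm (LAtom D) | DWF φ ∧ d ∈ hat φ} := by
  classical
  have hbij : Function.Bijective (fun d : D =>
      (⟨{φ : Fm (LAtom D) | DWF φ ∧ d ∈ hat φ}, Sd_isLogicalState d⟩ :
        {S : Set (Fm (LAtom D)) // IsLogicalState DWF DSeq S})) := by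
    constructor
    · intro a c hac
      have h := Subtype.mk_eq_mk.1 hac
      exact le_antisymm ((Sd_subset_iff hD).1 h.le) ((Sd_subset_iff hD).1 h.ge)
    · rintro ⟨S, hS⟩
      obtain ⟨d, hd⟩ := Sd_surjective hD S hS
      exact ⟨d, Subtype.ext hd⟩
  refine ⟨⟨Equiv.ofBijective _ hbij, ?_⟩, fun d => rfl⟩
  intro a c
  simp only [Equiv.ofBijective_apply, Subtype.mk_le_mk, Set.le_eq_subset]
  exact Sd_subset_iff hD
end
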